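/- Let γ > 0, σ > 0 and μ, a ∈ ℝ, and set μ_A = μ − √3·σ²/γ and μ_B = μ + √3·σ²/γ. Then ∫_ℝ (1 + √3·|w−a|/γ) · exp(−√3·|w−a|/γ) · φ_{μ,σ}(w) dw = exp((3σ² + 2√3·γ(a−μ))/(2γ²)) · ((1 − √3·a/γ + √3·μ_A/γ) · Φ((μ_A − a)/σ) + (√3/γ) · (σ/√(2π)) · exp(−(a−μ_A)²/(2σ²))) + exp((3σ² − 2√3·γ(a−μ))/(2γ²)) · ((1 + √3·a/γ − √3·μ_B/γ) · Φ((a − μ_B)/σ) + (√3/γ) · (σ/√(2π)) · exp(−(a−μ_B)²/(2σ²))). -/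

import Mathlib

/-!
On each side of `a` the kernel has the form `(1 - c (w - a)) e^{c (w - a)}` with `c = ±√3/γ`.
Multiplying the normal density by `e^{c w}` only shifts its mean by `c σ²`, at the cost of the
factor `e^{c μ + c² σ² / 2}` (exponential tilting). What remains on each half-line is an affine
function times a normal density: its constant part integrates to a value of `Phi`, and its
linear part is an exact derivative, `(w - m) φ_{m,σ}(w) = -σ² φ_{m,σ}'(w)`, giving `σ²` times the
density at `a`.
-/

open MeasureTheory Real

/-- Standard normal cumulative distribution function. -/
noncomputable def Phi (t : ℝ) : ℝ :=
  ∫ u in Set.Iic t, (Real.sqrt (2 * Real.pi))⁻¹ * Real.exp (-u ^ 2 / 2)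

/-- Normal density with mean μ and standard deviation σ. -/
noncomputable def normalPDF (μ σ x : ℝ) : ℝ :=
  (σ * Real.sqrt (2 * Real.pi))⁻¹ * Real.exp (-(x - μ) ^ 2 / (2 * σ ^ 2))

open Set

section Gaussian

variable {σ : ℝ}

lemma normalPDF_neg (m σ x : ℝ) : normalPDF m σ (-x) = normalPDF (-m) σ x := by
  simp only [normalPDF]
  ring_nf

lemma normalPDF_eq_mul_exp_neg_mul_sq (m σ x : ℝ) :
    normalPDF m σ x =
      (σ * √(2 * π))⁻¹ * exp (-(1 / (2 * σ ^ 2)) * (x - m) ^ 2) := by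
  simp only [normalPDF]
  ring_nf

lemma integrable_normalPDF (hσ : σ ≠ 0) (m : ℝ) : Integrable (normalPDF m σ) := by
  simp only [funext (normalPDF_eq_mul_exp_neg_mul_sq m σ)]
  exact ((integrable_exp_neg_mul_sq (by positivity)).comp_sub_right m).const_mul _

lemma integrable_sub_mul_normalPDF (hσ : σ ≠ 0) (m : ℝ) :
    Integrable (fun x => (x - m) * normalPDF m σ x) := by
  simp only [normalPDF_eq_mul_exp_neg_mul_sq m σ, mul_left_comm _ (σ * √(2 * π))⁻¹]
  exact ((integrable_mul_exp_neg_mul_sq (by positivity)).comp_sub_right m).const_mul _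

lemma integrable_affine_mul_normalPDF (hσ : σ ≠ 0) (m p q : ℝ) :
    Integrable (fun x => (p + q * (x - m)) * normalPDF m σ x) := by
  refine (((integrable_normalPDF hσ m).const_mul p).add
    ((integrable_sub_mul_normalPDF hσ m).const_mul q)).congr (.of_forall fun x => ?_)
  simp only [Pi.add_apply]
  ring

lemma hasDerivAt_normalPDF (m σ x : ℝ) :
    HasDerivAt (normalPDF m σ) (-((x - m) / σ ^ 2) * normalPDF m σ x) x := by
  have h := ((((hasDerivAt_id x).sub_const m).pow 2).neg.div_const (2 * σ ^ 2)).exp.const_mul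
    (σ * √(2 * π))⁻¹
  refine h.congr_deriv ?_
  simp only [normalPDF, Pi.neg_apply, Pi.pow_apply, id]
  ring

lemma integral_Iic_normalPDF (hσ : 0 < σ) (m t : ℝ) :
    ∫ x in Iic t, normalPDF m σ x = Phi ((t - m) / σ) := by
  let e : ℝ ≃o ℝ := (OrderIso.mulLeft₀ σ hσ).trans (OrderIso.addRight m)
  have he : ∀ u, e u = σ * u + m := fun u => rfl
  have himage : e '' Iic ((t - m) / σ) = Iic t := by
    rw [e.image_Iic, he, mul_div_cancel₀ _ hσ.ne', sub_add_cancel]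
  have hderiv (u : ℝ) : HasDerivAt e σ u :=
    (((hasDerivAt_id u).const_mul σ).add_const m).congr_deriv (mul_one σ)
  rw [← himage, integral_image_eq_integral_abs_deriv_smul measurableSet_Iic
    (fun u _ => (hderiv u).hasDerivWithinAt) e.injective.injOn, Phi]
  refine setIntegral_congr_fun measurableSet_Iic fun u _ => ?_
  simp only [he, normalPDF, smul_eq_mul, abs_of_pos hσ, add_sub_cancel_right]
  field_simp

lemma integral_Iic_sub_mul_normalPDF (hσ : σ ≠ 0) (m t : ℝ) :
    ∫ x in Iic t, (x - m) * normalPDF m σ x = -σ ^ 2 * normalPDF m σ t := by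
  have hderiv : ∀ x, HasDerivAt (fun x => -σ ^ 2 * normalPDF m σ x)
      ((x - m) * normalPDF m σ x) x := fun x =>
    ((hasDerivAt_normalPDF m σ x).const_mul (-σ ^ 2)).congr_deriv (by field_simp)
  have hint := (integrable_sub_mul_normalPDF hσ m).integrableOn (s := Iic t)
  have hlim := tendsto_zero_of_hasDerivAt_of_integrableOn_Iic (fun x _ => hderiv x) hint
    ((integrable_normalPDF hσ m).const_mul _).integrableOn
  simpa using integral_Iic_of_hasDerivAt_of_tendsto' (fun x _ => hderiv x) hint hlim

lemma integral_Iic_affine_mul_normalPDF (hσ : 0 < σ) (m t p q : ℝ) :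
    ∫ x in Iic t, (p + q * (x - m)) * normalPDF m σ x =
      p * Phi ((t - m) / σ) - q * σ ^ 2 * normalPDF m σ t := by
  simp only [add_mul, mul_assoc]
  rw [integral_add ((integrable_normalPDF hσ.ne' m).const_mul p).integrableOn
      ((integrable_sub_mul_normalPDF hσ.ne' m).const_mul q).integrableOn,
    integral_const_mul, integral_const_mul, integral_Iic_normalPDF hσ,
    integral_Iic_sub_mul_normalPDF hσ.ne']
  ring

lemma integral_Ioi_affine_mul_normalPDF (hσ : 0 < σ) (m t p q : ℝ) :
    ∫ x in Ioi t, (p + q * (x - m)) * normalPDF m σ x =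
      p * Phi ((m - t) / σ) + q * σ ^ 2 * normalPDF m σ t := by
  have hreflect (x : ℝ) : (p + q * (x - m)) * normalPDF m σ x =
      (p + -q * (-x - -m)) * normalPDF (-m) σ (-x) := by
    rw [normalPDF_neg, neg_neg]
    ring
  simp only [hreflect]
  rw [integral_comp_neg_Ioi t (fun x => (p + -q * (x - -m)) * normalPDF (-m) σ x),
    integral_Iic_affine_mul_normalPDF hσ, normalPDF_neg, neg_neg, neg_sub_neg]
  ring

lemma exp_mul_mul_normalPDF (hσ : σ ≠ 0) (c m x : ℝ) :
    exp (c * x) * normalPDF m σ x =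
      exp (c * m + c ^ 2 * σ ^ 2 / 2) * normalPDF (m + c * σ ^ 2) σ x := by
  simp only [normalPDF]
  rw [mul_left_comm, ← exp_add, mul_left_comm _ (σ * √(2 * π))⁻¹, ← exp_add]
  congr 2
  field_simp
  ring

lemma one_sub_mul_mul_exp_mul_normalPDF (hσ : σ ≠ 0) (c m a x : ℝ) :
    (1 - c * (x - a)) * exp (c * (x - a)) * normalPDF m σ x =
      exp (c * (m - a) + c ^ 2 * σ ^ 2 / 2) *
        ((1 - c * (m + c * σ ^ 2 - a) + -c * (x - (m + c * σ ^ 2))) *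
          normalPDF (m + c * σ ^ 2) σ x) := by
  have hsplit : exp (c * (x - a)) = exp (-(c * a)) * exp (c * x) := by
    rw [← exp_add]; ring_nf
  have hexp : exp (c * (m - a) + c ^ 2 * σ ^ 2 / 2) =
      exp (-(c * a)) * exp (c * m + c ^ 2 * σ ^ 2 / 2) := by
    rw [← exp_add]; ring_nf
  rw [hsplit, hexp]
  linear_combination (1 - c * (x - a)) * exp (-(c * a)) * exp_mul_mul_normalPDF hσ c m x

end Gaussian

/-- `c_γ(w, a) = matern15 (√3 / γ) (w - a)`. -/
noncomputable def matern15 (k r : ℝ) : ℝ := (1 + k * |r|) * exp (-k * |r|)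

lemma matern15_of_nonpos (k : ℝ) {r : ℝ} (hr : r ≤ 0) :
    matern15 k r = (1 - k * r) * exp (k * r) := by
  rw [matern15, abs_of_nonpos hr]
  ring_nf

lemma matern15_of_nonneg (k : ℝ) {r : ℝ} (hr : 0 ≤ r) :
    matern15 k r = (1 - -k * r) * exp (-k * r) := by
  rw [matern15, abs_of_nonneg hr]
  ring_nf

theorem integral_matern15_mul_normalPDF_eq {σ : ℝ} (hσ : 0 < σ) (k μ a : ℝ) :
    ∫ w, matern15 k (w - a) * normalPDF μ σ w =
      exp (k * (a - μ) + k ^ 2 * σ ^ 2 / 2) *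
          ((1 + k * (μ - k * σ ^ 2 - a)) * Phi ((μ - k * σ ^ 2 - a) / σ) +
            k * σ ^ 2 * normalPDF (μ - k * σ ^ 2) σ a) +
        exp (k * (μ - a) + k ^ 2 * σ ^ 2 / 2) *
          ((1 - k * (μ + k * σ ^ 2 - a)) * Phi ((a - (μ + k * σ ^ 2)) / σ) +
            k * σ ^ 2 * normalPDF (μ + k * σ ^ 2) σ a) := by
  set F := fun w => matern15 k (w - a) * normalPDF μ σ w
  have hle : EqOn F (fun w => exp (k * (μ - a) + k ^ 2 * σ ^ 2 / 2) *
      ((1 - k * (μ + k * σ ^ 2 - a) + -k * (w - (μ + k * σ ^ 2))) *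
        normalPDF (μ + k * σ ^ 2) σ w)) (Iic a) := fun w hw => by
    simp only [F, matern15_of_nonpos k (sub_nonpos.2 hw),
      one_sub_mul_mul_exp_mul_normalPDF hσ.ne']
  have hgt : EqOn F (fun w => exp (-k * (μ - a) + (-k) ^ 2 * σ ^ 2 / 2) *
      ((1 - -k * (μ + -k * σ ^ 2 - a) + - -k * (w - (μ + -k * σ ^ 2))) *
        normalPDF (μ + -k * σ ^ 2) σ w)) (Ioi a) := fun w hw => by
    simp only [F, matern15_of_nonneg k (sub_nonneg.2 hw.le),
      one_sub_mul_mul_exp_mul_normalPDF hσ.ne']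
  rw [← intervalIntegral.integral_Iic_add_Ioi
      ((((integrable_affine_mul_normalPDF hσ.ne' _ _ _).const_mul _).integrableOn).congr_fun
        hle.symm measurableSet_Iic)
      ((((integrable_affine_mul_normalPDF hσ.ne' _ _ _).const_mul _).integrableOn).congr_fun
        hgt.symm measurableSet_Ioi),
    setIntegral_congr_fun measurableSet_Iic hle, setIntegral_congr_fun measurableSet_Ioi hgt,
    integral_const_mul, integral_const_mul, integral_Iic_affine_mul_normalPDF hσ,
    integral_Ioi_affine_mul_normalPDF hσ]
  ring_nf

theorem integral_matern15_mul_normalPDF_general (γ σ μ a μA μB : ℝ)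
    (hσ : 0 < σ)
    (hμA : μA = μ - Real.sqrt 3 * σ ^ 2 / γ) (hμB : μB = μ + Real.sqrt 3 * σ ^ 2 / γ) :
    ∫ w : ℝ, (1 + Real.sqrt 3 * |w - a| / γ) * Real.exp (-(Real.sqrt 3) * |w - a| / γ) *
        normalPDF μ σ w =
      Real.exp ((3 * σ ^ 2 + 2 * Real.sqrt 3 * γ * (a - μ)) / (2 * γ ^ 2)) *
        ((1 - Real.sqrt 3 * a / γ + Real.sqrt 3 * μA / γ) * Phi ((μA - a) / σ) +
          Real.sqrt 3 / γ * (σ / Real.sqrt (2 * Real.pi)) *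
            Real.exp (-(a - μA) ^ 2 / (2 * σ ^ 2))) +
      Real.exp ((3 * σ ^ 2 - 2 * Real.sqrt 3 * γ * (a - μ)) / (2 * γ ^ 2)) *
        ((1 + Real.sqrt 3 * a / γ - Real.sqrt 3 * μB / γ) * Phi ((a - μB) / σ) +
          Real.sqrt 3 / γ * (σ / Real.sqrt (2 * Real.pi)) *
            Real.exp (-(a - μB) ^ 2 / (2 * σ ^ 2))) := by
  have hkernel (w : ℝ) : (1 + √3 * |w - a| / γ) * exp (-√3 * |w - a| / γ) =
      matern15 (√3 / γ) (w - a) := by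
    rw [matern15]
    ring_nf
  have hexponent (d : ℝ) : (3 * σ ^ 2 + 2 * √3 * γ * d) / (2 * γ ^ 2) =
      √3 / γ * d + (√3 / γ) ^ 2 * σ ^ 2 / 2 :=
    calc (3 * σ ^ 2 + 2 * √3 * γ * d) / (2 * γ ^ 2)
        = √3 * d * (γ / (γ * γ)) + 3 / γ ^ 2 * σ ^ 2 / 2 := by ring
      _ = √3 / γ * d + (√3 / γ) ^ 2 * σ ^ 2 / 2 := by
        rw [div_self_mul_self', div_pow, sq_sqrt zero_le_three]
        ring
  have hB : (3 * σ ^ 2 - 2 * √3 * γ * (a - μ)) / (2 * γ ^ 2) =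
      √3 / γ * (μ - a) + (√3 / γ) ^ 2 * σ ^ 2 / 2 := by
    rw [← hexponent]
    ring_nf
  simp only [hkernel]
  rw [integral_matern15_mul_normalPDF_eq hσ, hexponent, hB, hμA, hμB]
  simp only [normalPDF]
  field_simp
  ring_nf

theorem integral_matern15_mul_normalPDF (γ σ μ a μA μB : ℝ)
    (hγ : 0 < γ) (hσ : 0 < σ)
    (hμA : μA = μ - Real.sqrt 3 * σ ^ 2 / γ) (hμB : μB = μ + Real.sqrt 3 * σ ^ 2 / γ) :
    ∫ w : ℝ, (1 + Real.sqrt 3 * |w - a| / γ) * Real.exp (-(Real.sqrt 3) * |w - a| / γ) *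
        normalPDF μ σ w =
      Real.exp ((3 * σ ^ 2 + 2 * Real.sqrt 3 * γ * (a - μ)) / (2 * γ ^ 2)) *
        ((1 - Real.sqrt 3 * a / γ + Real.sqrt 3 * μA / γ) * Phi ((μA - a) / σ) +
          Real.sqrt 3 / γ * (σ / Real.sqrt (2 * Real.pi)) *
            Real.exp (-(a - μA) ^ 2 / (2 * σ ^ 2))) +
      Real.exp ((3 * σ ^ 2 - 2 * Real.sqrt 3 * γ * (a - μ)) / (2 * γ ^ 2)) *
        ((1 + Real.sqrt 3 * a / γ - Real.sqrt 3 * μB / γ) * Phi ((a - μB) / σ) +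
          Real.sqrt 3 / γ * (σ / Real.sqrt (2 * Real.pi)) *
            Real.exp (-(a - μB) ^ 2 / (2 * σ ^ 2))) :=
  integral_matern15_mul_normalPDF_general γ σ μ a μA μB hσ hμA hμB
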